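/- Every realizer of a total and inhabited formula is convergent: if A is total and inhabited and P ⊩₊ A (or P ⊩₋ A), then P does not diverge. -/

import Mathlib

set_option linter.unnecessarySeqFocus false

/-! # CCS with simultaneous actions (Abramsky, "Process Realizability") -/

/-- Labels: names (`inl`) and co-names (`inr`). -/
abbrev Label : Type := ℕ ⊕ ℕ

/-- The involution `λ ↦ λ̄` exchanging names and co-names. -/
def Label.bar : Label → Label
  | .inl n => .inr n
  | .inr n => .inl n

/-- Actions: finite sets of labels, performed simultaneously.  `τ = ∅`. -/
abbrev Act : Type := Finset Label

/-- A renaming: a partial injective function on labels preserving the involution. -/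
structure Renaming where
  toFun : Label → Option Label
  inj : ∀ ⦃x y z : Label⦄, toFun x = some z → toFun y = some z → x = y
  bar : ∀ x : Label, toFun (Label.bar x) = (toFun x).map Label.bar

/-- The pointwise extension of a renaming to actions. -/
def Renaming.onAction (f : Renaming) (a : Act) : Act :=
  a.filterMap f.toFun (fun _ _ _ hx hy => f.inj (Option.mem_def.mp hx) (Option.mem_def.mp hy))

/-- Guarded process terms of CCS with simultaneous actions:
prefix, countably-indexed guarded sums (all guards non-`τ`), parallel composition,
restriction, renaming, process variables (de Bruijn) and recursion. -/
inductive Proc : Type where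
  | pre (a : Act) (P : Proc)
  | sum (I : Set ℕ) (act : ℕ → Act) (cont : ℕ → Proc) (hg : ∀ n ∈ I, (act n).Nonempty)
  | par (P Q : Proc)
  | restrict (P : Proc) (L : Set Label)
  | rename (P : Proc) (f : Renaming)
  | var (n : ℕ)
  | fix (P : Proc)

/-- The inactive process `0` (the empty sum). -/
def Proc.nil : Proc := .sum ∅ (fun _ => ∅) (fun _ => .var 0) (by simp)

/-- Substitution of a process for the variable with de Bruijn index `d`. -/
def Proc.subst (R : Proc) : ℕ → Proc → Proc
  | d, .pre a P => .pre a (Proc.subst R d P)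
  | d, .sum I act cont hg => .sum I act (fun n => Proc.subst R d (cont n)) hg
  | d, .par P Q => .par (Proc.subst R d P) (Proc.subst R d Q)
  | d, .restrict P L => .restrict (Proc.subst R d P) L
  | d, .rename P f => .rename (Proc.subst R d P) f
  | d, .var n => if n = d then R else .var n
  | d, .fix P => .fix (Proc.subst R (d + 1) P)

/-- The labelled transition relation, with the generalized synchronization rule
for simultaneous (compound) actions. -/
inductive Step : Proc → Act → Proc → Prop where
  | pre {a P} : Step (.pre a P) a P
  | sum {I act cont hg} (j : ℕ) (hj : j ∈ I) : Step (.sum I act cont hg) (act j) (cont j)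
  | restrict {P a Q L} : Step P a Q → (∀ l ∈ a, l ∉ L ∧ Label.bar l ∉ L) →
      Step (.restrict P L) a (.restrict Q L)
  | rename {P a Q} {f : Renaming} : Step P a Q → (∀ l ∈ a, (f.toFun l).isSome) →
      Step (.rename P f) (f.onAction a) (.rename Q f)
  | fix {P a Q} : Step (Proc.subst (.fix P) 0 P) a Q → Step (.fix P) a Q
  | parL {P a P' Q} : Step P a P' → Step (.par P Q) a (.par P' Q)
  | parR {P Q a Q'} : Step Q a Q' → Step (.par P Q) a (.par P Q')
  | sync {P Q P' Q' a b c} : Step P (a ∪ b) P' → Step Q (b.image Label.bar ∪ c) Q' →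
      Disjoint a b → Disjoint (b.image Label.bar) c → Disjoint a c →
      Step (.par P Q) (a ∪ c) (.par P' Q')

/-- Zero or more silent (`τ`) transitions. -/
def TauStar : Proc → Proc → Prop :=
  Relation.ReflTransGen (fun P Q => Step P ∅ Q)

/-- Observable transition `P ⟹a Q`: `τ* a τ*`. -/
def Obs (P : Proc) (a : Act) (Q : Proc) : Prop :=
  ∃ P₁ P₂, TauStar P P₁ ∧ Step P₁ a P₂ ∧ TauStar P₂ Q

/-- Observable transitions along a string of (non-`τ`) actions. -/
inductive ObsSeq : Proc → List Act → Proc → Prop where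
  | nil {P Q} : TauStar P Q → ObsSeq P [] Q
  | cons {P a Q s R} : Obs P a Q → ObsSeq Q s R → ObsSeq P (a :: s) R

/-- The failures of a process: pairs `(s, X)` with `s` a string of nonempty actions and
`X` a set of nonempty actions such that `P ⟹s Q` for some `Q` refusing every action of `X`. -/
def failures (P : Proc) : Set (List Act × Set Act) :=
  { sX | (∀ a ∈ sX.1, a.Nonempty) ∧ (∀ a ∈ sX.2, a.Nonempty) ∧
      ∃ Q, ObsSeq P sX.1 Q ∧ ∀ a ∈ sX.2, ¬∃ R, Obs Q a R }

/-- Failures equivalence. -/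
def FailEq (P Q : Proc) : Prop := failures P = failures Q

/-- Weak simulations (with respect to the observable transitions). -/
def IsWeakSim (R : Proc → Proc → Prop) : Prop :=
  ∀ ⦃P Q⦄, R P Q →
    (∀ P', TauStar P P' → ∃ Q', TauStar Q Q' ∧ R P' Q') ∧
    (∀ a P', (a : Act).Nonempty → Obs P a P' → ∃ Q', Obs Q a Q' ∧ R P' Q')

/-- Weak bisimilarity. -/
def WeakBisim (P Q : Proc) : Prop :=
  ∃ R : Proc → Proc → Prop, IsWeakSim R ∧ IsWeakSim (fun x y => R y x) ∧ R P Q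
/-! ## The split name space and the basic combinators -/

/-- Build a bar-preserving partial injective renaming from a partial injective map on names. -/
def Renaming.ofNameFun (f : ℕ → Option ℕ)
    (hf : ∀ ⦃x y z : ℕ⦄, f x = some z → f y = some z → x = y) : Renaming where
  toFun := fun l =>
    match l with
    | .inl n => (f n).map .inl
    | .inr n => (f n).map .inr
  inj := by
    rintro (x | x) (y | y) (z | z) hx hy <;>
      simp only [Option.map_eq_some_iff] at hx hy <;>
      obtain ⟨a, ha, ha'⟩ := hx <;> obtain ⟨b, hb, hb'⟩ := hy <;>
        solve
          | (cases ha'; cases hb'; exact congrArg _ (hf ha hb))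
          | (cases hb')
          | (cases ha')
  bar := by
    rintro (n | n) <;> cases hf : f n <;> simp [Label.bar, hf]

/-- The underlying name of a label. -/
def Label.name : Label → ℕ := Sum.elim id id

/-- The injection `l` of the name space onto its "left" half (even names). -/
def lRen : Renaming := Renaming.ofNameFun (fun n => some (2 * n)) (by intro x y z hx hy; simp only [Option.some.injEq] at hx hy; omega)

/-- The injection `r` of the name space onto its "right" half (odd names). -/
def rRen : Renaming := Renaming.ofNameFun (fun n => some (2 * n + 1)) (by intro x y z hx hy; simp only [Option.some.injEq] at hx hy; omega)

/-- The partial inverse `l⁻¹` of `l`. -/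
def lInv : Renaming :=
  Renaming.ofNameFun (fun n => if n % 2 = 0 then some (n / 2) else none)
    (by intro x y z hx hy
        split at hx <;> split at hy <;> simp_all <;> omega)

/-- The partial inverse `r⁻¹` of `r`. -/
def rInv : Renaming :=
  Renaming.ofNameFun (fun n => if n % 2 = 1 then some (n / 2) else none)
    (by intro x y z hx hy
        split at hx <;> split at hy <;> simp_all <;> omega)

/-- The left half `ℒ_l` of the label space. -/
def LabL : Set Label := {x | x.name % 2 = 0}

/-- The right half `ℒ_r` of the label space. -/
def LabR : Set Label := {x | x.name % 2 = 1}

/-- Tensor product: disjoint (non-communicating) parallel composition `P[l] | Q[r]`. -/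
def tensor (P Q : Proc) : Proc := .par (P.rename lRen) (Q.rename rRen)

/-- Left (forwards) application `⟨Q | P⟩ = ((Q[l] | P) ∖ ℒ_l)[r⁻¹]`. -/
def lapp (Q P : Proc) : Proc := ((Proc.par (Q.rename lRen) P).restrict LabL).rename rInv

/-- Right (reverse) application `(P | R⟩ = ((P | R[r]) ∖ ℒ_r)[l⁻¹]`. -/
def rapp (P R : Proc) : Proc := ((Proc.par P (R.rename rRen)).restrict LabR).rename lInv

/-! ### The three-fold decomposition `𝒩 = 𝒩₁ ∪̇ 𝒩₂ ∪̇ 𝒩₃` and composition -/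

/-- `φ₁₂ : 𝒩 ≅ 𝒩₁ ∪̇ 𝒩₂` (`𝒩ᵢ` = names `≡ i - 1 (mod 3)`), carrying `𝒩_l` onto `𝒩₁`, `𝒩_r` onto `𝒩₂`. -/
def phi12 : Renaming :=
  Renaming.ofNameFun (fun n => some (if n % 2 = 0 then 3 * (n / 2) else 3 * (n / 2) + 1))
    (by intro x y z hx hy
        simp only [Option.some.injEq] at hx hy
        split at hx <;> split at hy <;> omega)

/-- `φ₂₃ : 𝒩 ≅ 𝒩₂ ∪̇ 𝒩₃`, carrying `𝒩_l` onto `𝒩₂`, `𝒩_r` onto `𝒩₃`. -/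
def phi23 : Renaming :=
  Renaming.ofNameFun (fun n => some (if n % 2 = 0 then 3 * (n / 2) + 1 else 3 * (n / 2) + 2))
    (by intro x y z hx hy
        simp only [Option.some.injEq] at hx hy
        split at hx <;> split at hy <;> omega)

/-- The partial inverse `φ₁₃⁻¹` of `φ₁₃ : 𝒩 ≅ 𝒩₁ ∪̇ 𝒩₃`. -/
def phi13Inv : Renaming :=
  Renaming.ofNameFun
    (fun n => if n % 3 = 0 then some (2 * (n / 3)) else if n % 3 = 2 then some (2 * (n / 3) + 1) else none)
    (by intro x y z hx hy
        split at hx <;> split at hy <;> simp_all <;> omega)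

/-- The middle part `𝒩₂` of the label space (as a set of labels). -/
def Lab2 : Set Label := {x | x.name % 3 = 1}

/-- Composition `P ; Q = ((P[φ₁₂] | Q[φ₂₃]) ∖ 𝒩₂)[φ₁₃⁻¹]`. -/
def comp (P Q : Proc) : Proc :=
  ((Proc.par (P.rename phi12) (Q.rename phi23)).restrict Lab2).rename phi13Inv

/-! ### The identity (wire) process -/

/-- The identity process `I = rec X. Σ_{a ∈ Act₊} (l(a) ∪ r(a)‾).X`. -/
noncomputable def Iproc : Proc :=
  .fix (.sum {n | ∃ a : Act, (Encodable.decode n : Option Act) = some a ∧ a.Nonempty}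
    (fun n =>
      match (Encodable.decode n : Option Act) with
      | some a => lRen.onAction a ∪ (rRen.onAction a).image Label.bar
      | none => {Sum.inl 0})
    (fun _ => .var 0)
    (by rintro n ⟨a, ha, hne⟩
        simp only [ha]
        obtain ⟨x, hx⟩ := hne
        refine Finset.Nonempty.mono Finset.subset_union_left ⟨(Sum.map (2 * ·) (2 * ·)) x, ?_⟩
        simp only [Renaming.onAction, Finset.mem_filterMap]
        exact ⟨x, hx, by cases x <;> rfl⟩))

/-! ## Guarded choice combinators, the additive pairing and injections, `!P`, divergence -/

/-- Binary guarded sum `a.P + b.Q` (guards must be non-`τ`). -/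
def gsum2 (a : Act) (P : Proc) (b : Act) (Q : Proc) (ha : a.Nonempty) (hb : b.Nonempty) : Proc :=
  .sum {0, 1} (fun n => if n = 0 then a else b) (fun n => if n = 0 then P else Q)
    (by intro n _; split <;> assumption)

/-- Ternary guarded sum `a.P + b.Q + c.R`. -/
def gsum3 (a : Act) (P : Proc) (b : Act) (Q : Proc) (c : Act) (R : Proc)
    (ha : a.Nonempty) (hb : b.Nonempty) (hc : c.Nonempty) : Proc :=
  .sum {0, 1, 2} (fun n => if n = 0 then a else if n = 1 then b else c)
    (fun n => if n = 0 then P else if n = 1 then Q else R)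
    (by intro n _; split <;> [skip; split] <;> assumption)

/-- The distinguished names: `α = 0`, `β = 1`, `ω = 2`, `δ = 3`, `γ = 4`, `σ = 5`. -/
def αAct : Act := {Sum.inl 0}
def βAct : Act := {Sum.inl 1}
def αBar : Act := {Sum.inr 0}
def βBar : Act := {Sum.inr 1}
def ωAct : Act := {Sum.inl 2}
def δBar : Act := {Sum.inr 3}
def γBar : Act := {Sum.inr 4}

/-- The additive pairing `⟨P, Q⟩ = r(α).P + r(β).Q`  (`r(α) = 1`, `r(β) = 3`). -/
def pairR (P Q : Proc) : Proc :=
  gsum2 {Sum.inl 1} P {Sum.inl 3} Q (Finset.singleton_nonempty _) (Finset.singleton_nonempty _)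

/-- The plain additive pairing `α.P + β.Q` used in the realizability clauses for `&`. -/
def pairProc (P Q : Proc) : Proc :=
  gsum2 αAct P βAct Q (Finset.singleton_nonempty _) (Finset.singleton_nonempty _)

/-- The left injection `l(P) = l(α)‾.P`  (`l(α) = 0`). -/
def injl (P : Proc) : Proc := .pre {Sum.inr 0} P

/-- The right injection `r(Q) = r(β)‾.Q`  (`r(β) = 3`). -/
def injr (Q : Proc) : Proc := .pre {Sum.inr 3} Q

/-- The exponential combinator `!P = rec X.(ω.0 + δ.P + γ.(X[l] | X[r]))`. -/
def bangProc (P : Proc) : Proc :=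
  .fix (gsum3 ωAct Proc.nil ({Sum.inl 3} : Act) P ({Sum.inl 4} : Act)
    (.par (Proc.rename (.var 0) lRen) (Proc.rename (.var 0) rRen))
    (Finset.singleton_nonempty _) (Finset.singleton_nonempty _) (Finset.singleton_nonempty _))

/-- `P` diverges if there is an infinite sequence of `τ`-transitions from `P`. -/
def Diverges (P : Proc) : Prop :=
  ∃ f : ℕ → Proc, f 0 = P ∧ ∀ n, Step (f n) ∅ (f (n + 1))

/-- `P ⊥ Q`: closing the system, `P` and `Q` interacting with each other yield no divergence. -/
def Orth (P Q : Proc) : Prop := ¬ Diverges ((Proc.par P Q).restrict Set.univ)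

/-! ## Formulas of classical propositional Linear Logic and process realizability -/

/-- Formulas of classical propositional Linear Logic.  Atoms are given arbitrary pairs of
positive/negative realizer sets, required to be closed under failures equivalence
(realizers are processes taken up to `≈_f`). -/
inductive Formula : Type where
  | atom (pos neg : Set Proc)
      (hpos : ∀ ⦃P Q : Proc⦄, FailEq P Q → P ∈ pos → Q ∈ pos)
      (hneg : ∀ ⦃P Q : Proc⦄, FailEq P Q → P ∈ neg → Q ∈ neg)
  | tensor (A B : Formula)
  | parr (A B : Formula)
  | wth (A B : Formula)
  | oplus (A B : Formula)
  | bang (A : Formula)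
  | quest (A : Formula)

/-- Linear negation `A^⊥`, by de Morgan duality. -/
def Formula.neg : Formula → Formula
  | .atom p n hp hn => .atom n p hn hp
  | .tensor A B => .parr A.neg B.neg
  | .parr A B => .tensor A.neg B.neg
  | .wth A B => .oplus A.neg B.neg
  | .oplus A B => .wth A.neg B.neg
  | .bang A => .quest A.neg
  | .quest A => .bang A.neg

/-- The inductively defined set of counter-realizers of `!A` (least fixed point):
`P ⊩₋ !A` iff `P ≈_f ω.0`, or `P ≈_f δ̄.Q` with `Q ⊩₋ A`, or `P ≈_f γ̄.Q` and for every
`R ⊩₊ A`, `⟨!R | Q⟩ ⊩₋ !A` and `(Q | !R⟩ ⊩₋ !A`. -/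
inductive BangNeg (posA negA : Set Proc) : Proc → Prop where
  | weak {P} : FailEq P (.pre ωAct Proc.nil) → BangNeg posA negA P
  | der {P Q} : FailEq P (.pre δBar Q) → Q ∈ negA → BangNeg posA negA P
  | contr {P Q} : FailEq P (.pre γBar Q) →
      (∀ R ∈ posA, BangNeg posA negA (lapp (bangProc R) Q)) →
      (∀ R ∈ posA, BangNeg posA negA (rapp Q (bangProc R))) →
      BangNeg posA negA P

/-- The realizability semantics of a formula: the pair
(positive realizers `⊩₊`, negative realizers/counter-realizers `⊩₋`). -/
def sem : Formula → Set Proc × Set Proc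
  | .atom p n _ _ => (p, n)
  | .tensor A B =>
      ({ P | ∃ P₁ P₂, FailEq P (tensor P₁ P₂) ∧ P₁ ∈ (sem A).1 ∧ P₂ ∈ (sem B).1 },
       { P | (∀ Q ∈ (sem A).1, lapp Q P ∈ (sem B).2) ∧ (∀ R ∈ (sem B).1, rapp P R ∈ (sem A).2) })
  | .parr A B =>
      ({ P | (∀ Q ∈ (sem A).2, lapp Q P ∈ (sem B).1) ∧ (∀ R ∈ (sem B).2, rapp P R ∈ (sem A).1) },
       { P | ∃ P₁ P₂, FailEq P (tensor P₁ P₂) ∧ P₁ ∈ (sem A).2 ∧ P₂ ∈ (sem B).2 })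
  | .wth A B =>
      ({ P | ∃ Q R, FailEq P (pairProc Q R) ∧ Q ∈ (sem A).1 ∧ R ∈ (sem B).1 },
       { P | (∃ Q, FailEq P (.pre αBar Q) ∧ Q ∈ (sem A).2) ∨
             (∃ R, FailEq P (.pre βBar R) ∧ R ∈ (sem B).2) })
  | .oplus A B =>
      ({ P | (∃ Q, FailEq P (.pre αBar Q) ∧ Q ∈ (sem A).1) ∨
             (∃ R, FailEq P (.pre βBar R) ∧ R ∈ (sem B).1) },
       { P | ∃ Q R, FailEq P (pairProc Q R) ∧ Q ∈ (sem A).2 ∧ R ∈ (sem B).2 })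
  | .bang A =>
      ({ P | ∃ Q, FailEq P (bangProc Q) ∧ Q ∈ (sem A).1 },
       { P | BangNeg (sem A).1 (sem A).2 P })
  | .quest A =>
      ({ P | BangNeg (sem A).2 (sem A).1 P },
       { P | ∃ Q, FailEq P (bangProc Q) ∧ Q ∈ (sem A).2 })

/-- `P ⊩₊ A`: `P` positively realizes `A`. -/
def PosReal (P : Proc) (A : Formula) : Prop := P ∈ (sem A).1

/-- `P ⊩₋ A`: `P` is a counter-realizer of `A`. -/
def NegReal (P : Proc) (A : Formula) : Prop := P ∈ (sem A).2

/-- The interpretation `⅋Γ` of a sequent `Γ = A₁, …, A_k` as a single formula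
(associated to the left, so that the last formula occupies the right half of the name space).
The empty sequent is given the trivial interpretation. -/
def seqPar : List Formula → Formula
  | [] => .atom Set.univ Set.univ (fun _ _ _ h => h) (fun _ _ _ h => h)
  | A :: Γ => Γ.foldl .parr A

/-- `P ⊩₊ Γ` for a sequent `Γ`, treating `Γ` as `⅋Γ`. -/
def SeqReal (P : Proc) (Γ : List Formula) : Prop := PosReal P (seqPar Γ)

/-- A formula `A` is total if every positive realizer is orthogonal to every counter-realizer. -/
def TotalFormula (A : Formula) : Prop := ∀ P, PosReal P A → ∀ Q, NegReal Q A → Orth P Q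

/-- A formula is inhabited if it has both a positive and a negative realizer. -/
def IsInhabited (A : Formula) : Prop := (∃ P, PosReal P A) ∧ (∃ Q, NegReal Q A)

theorem Diverges.map {F : Proc → Proc} (hF : ∀ ⦃P P' : Proc⦄, Step P ∅ P' → Step (F P) ∅ (F P'))
    {P : Proc} : Diverges P → Diverges (F P)
  | ⟨f, hf0, hf⟩ => ⟨F ∘ f, by simp [hf0], fun n => hF (hf n)⟩

theorem Diverges.restrict {P : Proc} (h : Diverges P) (L : Set Label) :
    Diverges (P.restrict L) :=
  h.map fun _ _ hs => Step.restrict hs (by simp)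

theorem Diverges.par_left {P : Proc} (h : Diverges P) (Q : Proc) : Diverges (P.par Q) :=
  h.map fun _ _ => Step.parL

theorem Diverges.par_right {Q : Proc} (h : Diverges Q) (P : Proc) : Diverges (P.par Q) :=
  h.map fun _ _ => Step.parR

theorem Diverges.not_orth_left {P : Proc} (h : Diverges P) (Q : Proc) : ¬ Orth P Q :=
  fun hPQ => hPQ ((h.par_left Q).restrict _)

theorem Diverges.not_orth_right {Q : Proc} (h : Diverges Q) (P : Proc) : ¬ Orth P Q :=
  fun hPQ => hPQ ((h.par_right P).restrict _)

/-- **Every realizer of a total and inhabited formula is convergent**: if `A` is total and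
inhabited then no `P ⊩₊ A` and no `P ⊩₋ A` diverges. -/
theorem realizers_of_total_inhabited_converge (A : Formula)
    (hT : TotalFormula A) (hI : IsInhabited A) (P : Proc) :
    (PosReal P A → ¬ Diverges P) ∧ (NegReal P A → ¬ Diverges P) := by
  obtain ⟨⟨R, hR⟩, ⟨Q, hQ⟩⟩ := hI
  exact ⟨fun hP hdiv => hdiv.not_orth_left Q (hT P hP Q hQ),
    fun hP hdiv => hdiv.not_orth_right R (hT R hR P hP)⟩
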